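/- arXiv:1804.06489 — 5 statements merged into one kernel-verified Lean document; each statement's English description precedes it below -/
import Mathlib

section
/- Let t, j ∈ ℕ with j ≤ t and μ > 0. Then ∫_0^∞ 2s · e^{−μ(j+1)s} (2e^{−μs} − e^{−2μs})^{t−j} ds = ∑_{k=0}^{t−j} C(t−j, k) · 2^{k+1} · (−1)^{t−j−k} / (μ(2t+1−j−k))^2, where C(n,k) denotes the binomial coefficient. -/
/-!
Writing `x = e^{-μs}`, the binomial theorem expands `(2x - x²)^{t-j}` into powers of `x`, so
the integrand is `2s` times a finite linear combination of exponentials `e^{-μ(2t+1-j-k)s}`.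
Each term then integrates by `∫₀^∞ s e^{-rs} ds = Γ(2)/r² = 1/r²`.
-/

open Real MeasureTheory Set Finset

theorem two_mul_sub_sq_pow {R : Type*} [CommRing R] (x : R) (n : ℕ) :
    (2 * x - x ^ 2) ^ n =
      ∑ k ∈ range (n + 1), (n.choose k * 2 ^ k * (-1) ^ (n - k) : R) * x ^ (2 * n - k) := by
  rw [sub_pow]
  refine sum_congr rfl fun k hk => ?_
  have hkn : k ≤ n := Nat.lt_succ_iff.mp (mem_range.mp hk)
  have hsign : (-1 : R) ^ (k + n) = (-1) ^ (n - k) := by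
    rw [show k + n = n - k + 2 * k by omega, pow_add, pow_mul, neg_one_sq, one_pow, mul_one]
  rw [hsign, mul_pow, ← pow_mul, show 2 * n - k = k + 2 * (n - k) by omega, pow_add]
  ring

theorem integrableOn_mul_exp_neg_mul_Ioi {r : ℝ} (hr : 0 < r) :
    IntegrableOn (fun s : ℝ => s * exp (-(r * s))) (Ioi 0) := by
  simpa [rpow_one] using
    integrableOn_rpow_mul_exp_neg_mul_rpow (s := 1) (p := 1) (by norm_num) one_pos hr

theorem integral_mul_exp_neg_mul_Ioi {r : ℝ} (hr : 0 < r) :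
    ∫ s in Ioi 0, s * exp (-(r * s)) = 1 / r ^ 2 := by
  have h := integral_rpow_mul_exp_neg_mul_Ioi two_pos hr
  norm_num [Gamma_two] at h
  simpa using h

theorem integral_mul_sum_exp_neg_mul_Ioi {ι : Type*} (K : Finset ι) (c r : ι → ℝ)
    (hr : ∀ k ∈ K, 0 < r k) :
    ∫ s in Ioi 0, s * ∑ k ∈ K, c k * exp (-(r k * s)) = ∑ k ∈ K, c k / r k ^ 2 := by
  simp_rw [mul_sum, mul_left_comm _ (c _)]
  rw [integral_finsetSum _ fun k hk => (integrableOn_mul_exp_neg_mul_Ioi (hr k hk)).const_mul _]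
  refine sum_congr rfl fun k hk => ?_
  rw [integral_const_mul, integral_mul_exp_neg_mul_Ioi (hr k hk), mul_one_div]

/-- Second moment of the type-`j` request service time in the
replicate-to-all system with availability `t` and exponential rate-`μ` servers (Lemma 1):
`∫₀^∞ 2s e^{−μ(j+1)s} (2e^{−μs} − e^{−2μs})^{t−j} ds
  = ∑_{k=0}^{t−j} C(t−j,k) 2^{k+1} (−1)^{t−j−k} / (μ(2t+1−j−k))²`. -/
theorem type_j_second_moment_formula (t j : ℕ) (hjt : j ≤ t) (μ : ℝ) (hμ : 0 < μ) :
    ∫ s in Set.Ioi (0 : ℝ),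
        2 * s * (Real.exp (-(μ * (j + 1) * s)) *
          (2 * Real.exp (-(μ * s)) - Real.exp (-(2 * μ * s))) ^ (t - j))
      = ∑ k ∈ Finset.range (t - j + 1),
          (t - j).choose k * 2 ^ (k + 1) * (-1 : ℝ) ^ (t - j - k) /
            (μ * ((2 * t + 1 - j - k : ℕ) : ℝ)) ^ 2 := by
  set n := t - j
  have hrate : ∀ k ∈ range (n + 1), j + 1 + (2 * n - k) = 2 * t + 1 - j - k := by
    intro k hk
    have := mem_range.mp hk
    omega
  have hexpand : ∀ s : ℝ,
      2 * s * (exp (-(μ * (j + 1) * s)) * (2 * exp (-(μ * s)) - exp (-(2 * μ * s))) ^ n) =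
        s * ∑ k ∈ range (n + 1), n.choose k * 2 ^ (k + 1) * (-1 : ℝ) ^ (n - k) *
          exp (-(μ * ((2 * t + 1 - j - k : ℕ) : ℝ) * s)) := by
    intro s
    rw [show exp (-(2 * μ * s)) = exp (-(μ * s)) ^ 2 by rw [← exp_nat_mul]; ring_nf,
      two_mul_sub_sq_pow, mul_sum, mul_sum, mul_sum]
    refine sum_congr rfl fun k hk => ?_
    have hexp : exp (-(μ * (j + 1) * s)) * exp (-(μ * s)) ^ (2 * n - k) =
        exp (-(μ * ((2 * t + 1 - j - k : ℕ) : ℝ) * s)) := by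
      rw [← hrate k hk, ← exp_nat_mul, ← exp_add]
      push_cast
      ring_nf
    rw [← hexp]
    ring
  have hpos : ∀ k ∈ range (n + 1), 0 < μ * ((2 * t + 1 - j - k : ℕ) : ℝ) := by
    intro k hk
    rw [← hrate k hk]
    positivity
  simp only [hexpand]
  exact integral_mul_sum_exp_neg_mul_Ioi _ _ _ hpos
end

section
/- Let t, j ∈ ℕ with j < t, let μ > 0 and let m ≥ 1 be an integer. Then ∫_0^∞ s^{m−1} e^{−μ(j+2)s} (2e^{−μs} − e^{−2μs})^{t−j−1} ds < ∫_0^∞ s^{m−1} e^{−μ(j+1)s} (2e^{−μs} − e^{−2μs})^{t−j} ds. Consequently all moments E[S_j^m] = ∫_0^∞ m s^{m−1} P(S_j > s) ds of the type-j request service time decrease strictly monotonically in j. -/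
/-!
`P(S_{j+1} > s)` arises from `P(S_j > s)` by replacing one factor
`2e^{−μs} − e^{−2μs} = P(max(X, Y) > s)` by `e^{−μs} = P(X > s)`, and the difference of the two is
`e^{−μs}(1 − e^{−μs}) > 0` for `s > 0`. So the moment integrands compare strictly on `(0, ∞)`;
both are dominated by `s^{m−1} e^{−bs}` for some `b > 0`, hence integrable, and the strict pointwise
inequality passes to the integrals.
-/

open Real MeasureTheory Set

theorem setIntegral_lt_setIntegral_of_forall_lt {X : Type*} [MeasurableSpace X] {μ : Measure X}
    {s : Set X} {f g : X → ℝ} (hs : MeasurableSet s) (hμs : μ s ≠ 0)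
    (hf : IntegrableOn f s μ) (hg : IntegrableOn g s μ) (hlt : ∀ x ∈ s, f x < g x) :
    ∫ x in s, f x ∂μ < ∫ x in s, g x ∂μ := by
  rw [← sub_pos, ← integral_sub hg hf,
    setIntegral_pos_iff_support_of_nonneg_ae (f := fun x => g x - f x) _ (hg.sub hf)]
  · rwa [inter_eq_self_of_subset_right fun x hx => Function.mem_support.2 (sub_pos.2 (hlt x hx)).ne',
      pos_iff_ne_zero]
  · filter_upwards [ae_restrict_mem hs] with x hx using sub_nonneg.2 (hlt x hx).le

theorem integrableOn_pow_mul_exp_neg_mul (n : ℕ) {b : ℝ} (hb : 0 < b) :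
    IntegrableOn (fun s : ℝ => s ^ n * exp (-(b * s))) (Ioi 0) := by
  have := integrableOn_rpow_mul_exp_neg_mul_rpow (s := n) (neg_one_lt_zero.trans_le n.cast_nonneg)
    one_pos hb
  simpa only [rpow_one, rpow_natCast, neg_mul] using this

theorem integrableOn_pow_mul_exp_neg_mul_mul (n : ℕ) {b : ℝ} (hb : 0 < b) {h : ℝ → ℝ}
    (hm : AEStronglyMeasurable h (volume.restrict (Ioi 0))) (hle : ∀ s > 0, ‖h s‖ ≤ 1) :
    IntegrableOn (fun s : ℝ => s ^ n * (exp (-(b * s)) * h s)) (Ioi 0) := by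
  refine (integrableOn_pow_mul_exp_neg_mul n hb).mono' ?_ ?_
  · fun_prop
  · filter_upwards [ae_restrict_mem measurableSet_Ioi] with s (hs : 0 < s)
    rw [← mul_assoc, norm_mul, norm_of_nonneg (by positivity)]
    exact mul_le_of_le_one_right (by positivity) (hle s hs)

theorem exp_neg_two_mul_mul_eq_sq (μ s : ℝ) : exp (-(2 * μ * s)) = exp (-(μ * s)) ^ 2 := by
  rw [← exp_nat_mul]; ring_nf

theorem exp_neg_mul_lt_two_mul_exp_neg_mul_sub {μ s : ℝ} (hμ : 0 < μ) (hs : 0 < s) :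
    exp (-(μ * s)) < 2 * exp (-(μ * s)) - exp (-(2 * μ * s)) := by
  have hx : exp (-(μ * s)) < 1 := exp_lt_one_iff.2 (by nlinarith)
  rw [exp_neg_two_mul_mul_eq_sq]
  nlinarith [exp_pos (-(μ * s))]

theorem two_mul_exp_neg_mul_sub_le_one (μ s : ℝ) :
    2 * exp (-(μ * s)) - exp (-(2 * μ * s)) ≤ 1 := by
  rw [exp_neg_two_mul_mul_eq_sq]
  nlinarith [sq_nonneg (1 - exp (-(μ * s)))]

theorem norm_two_mul_exp_neg_mul_sub_pow_le_one {μ s : ℝ} (hμ : 0 < μ) (hs : 0 < s) (k : ℕ) :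
    ‖(2 * exp (-(μ * s)) - exp (-(2 * μ * s))) ^ k‖ ≤ 1 := by
  have h0 := (exp_pos _).trans (exp_neg_mul_lt_two_mul_exp_neg_mul_sub hμ hs)
  rw [norm_pow, norm_of_nonneg h0.le]
  exact pow_le_one₀ h0.le (two_mul_exp_neg_mul_sub_le_one μ s)

theorem pow_mul_exp_neg_mul_mul_pow_lt_succ {μ s : ℝ} (hμ : 0 < μ) (hs : 0 < s) (n k : ℕ) (c : ℝ) :
    s ^ n * (exp (-(μ * (c + 1) * s)) * (2 * exp (-(μ * s)) - exp (-(2 * μ * s))) ^ k)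
      < s ^ n * (exp (-(μ * c * s)) * (2 * exp (-(μ * s)) - exp (-(2 * μ * s))) ^ (k + 1)) := by
  have hq := exp_neg_mul_lt_two_mul_exp_neg_mul_sub hμ hs
  have hsplit : exp (-(μ * (c + 1) * s)) = exp (-(μ * c * s)) * exp (-(μ * s)) := by
    rw [← exp_add]; ring_nf
  rw [hsplit, mul_assoc (exp (-(μ * c * s))), mul_comm (exp (-(μ * s))), pow_succ]
  have hq0 := (exp_pos _).trans hq
  gcongr

theorem type_j_moments_strict_anti_general (t j : ℕ) (hjt : j < t) (μ : ℝ) (hμ : 0 < μ)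
    (m : ℕ) :
    ∫ s in Set.Ioi (0 : ℝ),
        s ^ (m - 1) * (Real.exp (-(μ * (j + 2) * s)) *
          (2 * Real.exp (-(μ * s)) - Real.exp (-(2 * μ * s))) ^ (t - j - 1))
      < ∫ s in Set.Ioi (0 : ℝ),
        s ^ (m - 1) * (Real.exp (-(μ * (j + 1) * s)) *
          (2 * Real.exp (-(μ * s)) - Real.exp (-(2 * μ * s))) ^ (t - j)) := by
  set k := t - j - 1
  rw [show t - j = k + 1 by omega, show (j : ℝ) + 2 = j + 1 + 1 by ring]
  refine setIntegral_lt_setIntegral_of_forall_lt measurableSet_Ioi (by simp)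
    ?_ ?_ fun s hs => pow_mul_exp_neg_mul_mul_pow_lt_succ hμ hs (m - 1) k (j + 1)
  · exact integrableOn_pow_mul_exp_neg_mul_mul (m - 1) (by positivity) (by fun_prop)
      fun s hs => norm_two_mul_exp_neg_mul_sub_pow_le_one hμ hs k
  · exact integrableOn_pow_mul_exp_neg_mul_mul (m - 1) (by positivity) (by fun_prop)
      fun s hs => norm_two_mul_exp_neg_mul_sub_pow_le_one hμ hs (k + 1)

/-- All moments of the type-`j` request service time in the replicate-to-all
system with availability `t` strictly decrease in `j` (Lemma 1): for every integer `m ≥ 1`,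
`∫₀^∞ s^{m−1} e^{−μ(j+2)s} (2e^{−μs} − e^{−2μs})^{t−j−1} ds
  < ∫₀^∞ s^{m−1} e^{−μ(j+1)s} (2e^{−μs} − e^{−2μs})^{t−j} ds`. -/
theorem type_j_moments_strict_anti (t j : ℕ) (hjt : j < t) (μ : ℝ) (hμ : 0 < μ)
    (m : ℕ) (hm : 1 ≤ m) :
    ∫ s in Set.Ioi (0 : ℝ),
        s ^ (m - 1) * (Real.exp (-(μ * (j + 2) * s)) *
          (2 * Real.exp (-(μ * s)) - Real.exp (-(2 * μ * s))) ^ (t - j - 1))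
      < ∫ s in Set.Ioi (0 : ℝ),
        s ^ (m - 1) * (Real.exp (-(μ * (j + 1) * s)) *
          (2 * Real.exp (-(μ * s)) - Real.exp (-(2 * μ * s))) ^ (t - j)) :=
  type_j_moments_strict_anti_general t j hjt μ hμ m
end

section
/- Let α, β, γ > 0 with α < β + γ and β < α + γ. Define p₀ = (γ² − (α−β)²)/(γ(α+β+γ)), and for i ≥ 0 set a_i = (α/(β+γ))^i · p₀ and b_i = (β/(α+γ))^i · p₀. Then: (i) α a_i = (β+γ) a_{i+1} and β b_i = (α+γ) b_{i+1} for all i ≥ 0 (the high-traffic balance equations hold); and (ii) p₀ + ∑_{i=1}^∞ a_i + ∑_{i=1}^∞ b_i = 1, where both series converge. -/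
/-!
Both chains are geometric, so `∑_{i≥1} a_i = α/(β+γ-α) · p₀` and `∑_{i≥1} b_i = β/(α+γ-β) · p₀`.
The normalisation then rests on the factorisation `γ² - (α-β)² = (β+γ-α)(α+γ-β)` together with
`(β+γ-α)(α+γ-β) + α(α+γ-β) + β(β+γ-α) = γ(α+β+γ)`.
-/

theorem mul_div_pow_mul_eq_mul_div_pow_succ_mul {K : Type*} [Field K] {n d : K} (hd : d ≠ 0)
    (c : K) (i : ℕ) : n * ((n / d) ^ i * c) = d * ((n / d) ^ (i + 1) * c) := by
  rw [pow_succ]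
  field_simp

theorem hasSum_div_pow_succ_mul {n d : ℝ} (hnd : |n| < d) (c : ℝ) :
    HasSum (fun i : ℕ => (n / d) ^ (i + 1) * c) (n / (d - n) * c) := by
  have hd : 0 < d := (abs_nonneg n).trans_lt hnd
  have hdn : d - n ≠ 0 := by linarith [le_abs_self n]
  have hr : |n / d| < 1 := by rwa [abs_div, abs_of_pos hd, div_lt_one hd]
  have hgeom := (hasSum_geometric_of_abs_lt_one hr).mul_right (n / d * c)
  have hsum : (1 - n / d)⁻¹ * (n / d * c) = n / (d - n) * c := by
    field_simp
  have hterm : (fun i : ℕ => (n / d) ^ (i + 1) * c) = fun i => (n / d) ^ i * (n / d * c) := by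
    funext i
    ring
  rw [hterm, ← hsum]
  exact hgeom

theorem high_traffic_mass_eq_one {α β γ : ℝ} (h1 : α < β + γ) (h2 : β < α + γ)
    (hαβγ : α + β + γ ≠ 0) :
    let p₀ := (γ ^ 2 - (α - β) ^ 2) / (γ * (α + β + γ))
    p₀ + α / (β + γ - α) * p₀ + β / (α + γ - β) * p₀ = 1 := by
  have hγ : γ ≠ 0 := by linarith
  have hA : β + γ - α ≠ 0 := by linarith
  have hB : α + γ - β ≠ 0 := by linarith
  field_simp
  ring

theorem high_traffic_steady_state_general
    (α β γ : ℝ) (hα : 0 < α) (hβ : 0 < β)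
    (h1 : α < β + γ) (h2 : β < α + γ)
    (p₀ : ℝ) (hp₀ : p₀ = (γ ^ 2 - (α - β) ^ 2) / (γ * (α + β + γ)))
    (a b : ℕ → ℝ)
    (ha : ∀ i, a i = (α / (β + γ)) ^ i * p₀)
    (hb : ∀ i, b i = (β / (α + γ)) ^ i * p₀) :
    (∀ i, α * a i = (β + γ) * a (i + 1) ∧ β * b i = (α + γ) * b (i + 1)) ∧
      Summable (fun i : ℕ => a (i + 1)) ∧ Summable (fun i : ℕ => b (i + 1)) ∧
      p₀ + (∑' i : ℕ, a (i + 1)) + (∑' i : ℕ, b (i + 1)) = 1 := by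
  have hαa : |α| < β + γ := by rwa [abs_of_pos hα]
  have hβb : |β| < α + γ := by rwa [abs_of_pos hβ]
  have hsumA : HasSum (fun i => a (i + 1)) (α / (β + γ - α) * p₀) := by
    simpa only [ha] using hasSum_div_pow_succ_mul hαa p₀
  have hsumB : HasSum (fun i => b (i + 1)) (β / (α + γ - β) * p₀) := by
    simpa only [hb] using hasSum_div_pow_succ_mul hβb p₀
  refine ⟨fun i => ⟨?_, ?_⟩, hsumA.summable, hsumB.summable, ?_⟩
  · rw [ha, ha]
    exact mul_div_pow_mul_eq_mul_div_pow_succ_mul (by linarith) p₀ i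
  · rw [hb, hb]
    exact mul_div_pow_mul_eq_mul_div_pow_succ_mul (by linarith) p₀ i
  · rw [hsumA.tsum_eq, hsumB.tsum_eq, hp₀]
    exact high_traffic_mass_eq_one h1 h2 (by linarith)

/-- High-traffic steady-state probabilities of the replicate-to-all system
with availability one (Section III-B): with `p₀ = (γ²−(α−β)²)/(γ(α+β+γ))`,
`a_i = (α/(β+γ))^i p₀` and `b_i = (β/(α+γ))^i p₀`, the balance equations
`α a_i = (β+γ) a_{i+1}`, `β b_i = (α+γ) b_{i+1}` hold, the series `∑_{i≥1} a_i` and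
`∑_{i≥1} b_i` converge, and `p₀ + ∑_{i=1}^∞ a_i + ∑_{i=1}^∞ b_i = 1`. -/
theorem high_traffic_steady_state
    (α β γ : ℝ) (hα : 0 < α) (hβ : 0 < β) (hγ : 0 < γ)
    (h1 : α < β + γ) (h2 : β < α + γ)
    (p₀ : ℝ) (hp₀ : p₀ = (γ ^ 2 - (α - β) ^ 2) / (γ * (α + β + γ)))
    (a b : ℕ → ℝ)
    (ha : ∀ i, a i = (α / (β + γ)) ^ i * p₀)
    (hb : ∀ i, b i = (β / (α + γ)) ^ i * p₀) :
    (∀ i, α * a i = (β + γ) * a (i + 1) ∧ β * b i = (α + γ) * b (i + 1)) ∧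
      Summable (fun i : ℕ => a (i + 1)) ∧ Summable (fun i : ℕ => b (i + 1)) ∧
      p₀ + (∑' i : ℕ, a (i + 1)) + (∑' i : ℕ, b (i + 1)) = 1 :=
  high_traffic_steady_state_general α β γ hα hβ h1 h2 p₀ hp₀ a b ha hb
end

section
/- Let t, j ∈ ℕ with j ≤ t, let σ > 0 and let α > 0 satisfy α(t+1) > 1. Then σ + ∫_σ^∞ (σ/x)^{α(j+1)} · (2(σ/x)^α − (σ/x)^{2α})^{t−j} dx = ∑_{k=0}^{t−j} C(t−j, k) · 2^k · (−1)^{t−j−k} · σ · α(2t+1−j−k)/(α(2t+1−j−k) − 1), where C(n,k) denotes the binomial coefficient. -/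
/-!
Writing `u = (σ/x)^α`, the integrand is the polynomial `u^(j+1) (2u - u²)^(t-j)`; expanding it
binomially turns it into a combination of pure Pareto tails `(σ/x)^β` with `β ≥ α(t+1) > 1`,
each of which integrates to `σ/(β-1)`. The binomial coefficients sum to `(2 - 1)^(t-j) = 1`,
which absorbs the leading `σ` and turns each `σ + σ/(β-1)` into `σβ/(β-1)`.
-/

open Real MeasureTheory Finset

lemma div_rpow_eq_mul_rpow_neg {σ x : ℝ} (hσ : 0 ≤ σ) (hx : 0 < x) (β : ℝ) :
    (σ / x) ^ β = σ ^ β * x ^ (-β) := by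
  rw [div_rpow hσ hx.le, rpow_neg hx.le, div_eq_mul_inv]

lemma integrableOn_Ioi_div_rpow {σ β : ℝ} (hσ : 0 < σ) (hβ : 1 < β) :
    IntegrableOn (fun x : ℝ => (σ / x) ^ β) (Set.Ioi σ) :=
  IntegrableOn.congr_fun ((integrableOn_Ioi_rpow_of_lt (a := -β) (by linarith) hσ).const_mul _)
    (fun x hx => (div_rpow_eq_mul_rpow_neg hσ.le (hσ.trans hx) β).symm) measurableSet_Ioi

lemma add_integral_Ioi_div_rpow {σ β : ℝ} (hσ : 0 < σ) (hβ : 1 < β) :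
    σ + ∫ x in Set.Ioi σ, (σ / x) ^ β = σ * β / (β - 1) := by
  rw [setIntegral_congr_fun measurableSet_Ioi
      (fun x hx => div_rpow_eq_mul_rpow_neg hσ.le (hσ.trans hx) β),
    integral_const_mul, integral_Ioi_rpow_of_lt (by linarith) hσ, rpow_add hσ, rpow_neg hσ.le,
    rpow_one]
  have hσβ : σ ^ β ≠ 0 := (rpow_pos_of_pos hσ β).ne'
  have hβ1 : β - 1 ≠ 0 := by linarith
  have hβ1' : -β + 1 ≠ 0 := by linarith
  field_simp
  ring

lemma pow_mul_two_mul_sub_sq_pow {R : Type*} [CommRing R] (a : R) (n m : ℕ) :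
    a ^ n * (2 * a - a ^ 2) ^ m
      = ∑ k ∈ range (m + 1), m.choose k * 2 ^ k * (-1 : R) ^ (m - k) * a ^ (n + 2 * m - k) := by
  rw [sub_eq_add_neg, add_pow, mul_sum]
  refine sum_congr rfl fun k hk => ?_
  have hkm : k ≤ m := Nat.lt_succ_iff.mp (mem_range.mp hk)
  rw [show n + 2 * m - k = n + k + 2 * (m - k) by omega, neg_pow, mul_pow, pow_add, pow_add,
    pow_mul]
  ring

lemma sum_choose_mul_two_pow_mul_neg_one_pow (R : Type*) [CommRing R] (m : ℕ) :
    ∑ k ∈ range (m + 1), (m.choose k : R) * 2 ^ k * (-1 : R) ^ (m - k) = 1 := by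
  have h := add_pow (2 : R) (-1) m
  rw [show (2 : R) + -1 = 1 by norm_num, one_pow] at h
  exact (sum_congr rfl fun k _ => by ring).trans h.symm

lemma rpow_mul_two_mul_rpow_sub_rpow_pow {u : ℝ} (hu : 0 ≤ u) (α : ℝ) (n m : ℕ) :
    u ^ (α * n) * (2 * u ^ α - u ^ (2 * α)) ^ m
      = ∑ k ∈ range (m + 1),
          m.choose k * 2 ^ k * (-1 : ℝ) ^ (m - k) * u ^ (α * ((n + 2 * m - k : ℕ) : ℝ)) := by
  have hpow : ∀ N : ℕ, u ^ (α * N) = (u ^ α) ^ N := fun N => by rw [rpow_mul hu, rpow_natCast]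
  rw [hpow, show 2 * α = α * (2 : ℕ) by push_cast; ring, hpow, pow_mul_two_mul_sub_sq_pow]
  simp only [hpow]

theorem add_integral_Ioi_div_rpow_mul_two_mul_sub_pow {σ α : ℝ} (hσ : 0 < σ) {n m : ℕ}
    (hα : 1 < α * ((n + m : ℕ) : ℝ)) :
    σ + ∫ x in Set.Ioi σ, (σ / x) ^ (α * n) * (2 * (σ / x) ^ α - (σ / x) ^ (2 * α)) ^ m
      = ∑ k ∈ range (m + 1),
          m.choose k * 2 ^ k * (-1 : ℝ) ^ (m - k) * σ *
            (α * ((n + 2 * m - k : ℕ) : ℝ)) / (α * ((n + 2 * m - k : ℕ) : ℝ) - 1) := by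
  set c : ℕ → ℝ := fun k => m.choose k * 2 ^ k * (-1 : ℝ) ^ (m - k)
  set β : ℕ → ℝ := fun k => α * ((n + 2 * m - k : ℕ) : ℝ)
  have hβ : ∀ k ∈ range (m + 1), 1 < β k := fun k hk => by
    have hk : n + m ≤ n + 2 * m - k := by have := mem_range.mp hk; omega
    have hα0 : 0 ≤ α := by
      by_contra! h
      nlinarith [(Nat.cast_nonneg (n + m) : (0 : ℝ) ≤ _)]
    exact hα.trans_le (mul_le_mul_of_nonneg_left (by exact_mod_cast hk) hα0)
  calc σ + ∫ x in Set.Ioi σ, (σ / x) ^ (α * n) * (2 * (σ / x) ^ α - (σ / x) ^ (2 * α)) ^ m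
      = σ + ∫ x in Set.Ioi σ, ∑ k ∈ range (m + 1), c k * (σ / x) ^ β k := by
        refine congrArg (σ + ·) (setIntegral_congr_fun measurableSet_Ioi fun x hx => ?_)
        exact rpow_mul_two_mul_rpow_sub_rpow_pow (div_pos hσ (hσ.trans hx)).le α n m
    _ = ∑ k ∈ range (m + 1), c k * (σ + ∫ x in Set.Ioi σ, (σ / x) ^ β k) := by
        rw [integral_finsetSum _ fun k hk => (integrableOn_Ioi_div_rpow hσ (hβ k hk)).const_mul _]
        simp only [integral_const_mul, mul_add, sum_add_distrib, ← sum_mul,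
          sum_choose_mul_two_pow_mul_neg_one_pow, c, one_mul]
    _ = ∑ k ∈ range (m + 1), c k * σ * β k / (β k - 1) := by
        refine sum_congr rfl fun k hk => ?_
        rw [add_integral_Ioi_div_rpow hσ (hβ k hk)]
        ring

theorem pareto_type_j_mean_formula_general (t j : ℕ) (hjt : j ≤ t)
    (σ α : ℝ) (hσ : 0 < σ) (hα1 : α * (t + 1) > 1) :
    σ + ∫ x in Set.Ioi σ,
        (σ / x) ^ (α * (j + 1)) *
          (2 * (σ / x) ^ α - (σ / x) ^ (2 * α)) ^ (t - j)
      = ∑ k ∈ Finset.range (t - j + 1),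
          (t - j).choose k * 2 ^ k * (-1 : ℝ) ^ (t - j - k) * σ *
            (α * ((2 * t + 1 - j - k : ℕ) : ℝ)) /
              (α * ((2 * t + 1 - j - k : ℕ) : ℝ) - 1) := by
  have hα : 1 < α * (((j + 1) + (t - j) : ℕ) : ℝ) := by
    rw [show (j + 1) + (t - j) = t + 1 by omega]
    push_cast
    exact hα1
  have hexp : ∀ k, 2 * t + 1 - j - k = (j + 1) + 2 * (t - j) - k := fun k => by omega
  have h := add_integral_Ioi_div_rpow_mul_two_mul_sub_pow hσ hα
  push_cast at h
  simpa only [hexp] using h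

/-- First-moment formula (equation (20)) for the type-`j` request service
time with `Pareto(σ, α)` servers:
`σ + ∫_σ^∞ (σ/x)^{α(j+1)} (2(σ/x)^α − (σ/x)^{2α})^{t−j} dx
  = ∑_{k=0}^{t−j} C(t−j,k) 2^k (−1)^{t−j−k} σ α(2t+1−j−k)/(α(2t+1−j−k) − 1)`. -/
theorem pareto_type_j_mean_formula (t j : ℕ) (hjt : j ≤ t)
    (σ α : ℝ) (hσ : 0 < σ) (hα : 0 < α) (hα1 : α * (t + 1) > 1) :
    σ + ∫ x in Set.Ioi σ,
        (σ / x) ^ (α * (j + 1)) *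
          (2 * (σ / x) ^ α - (σ / x) ^ (2 * α)) ^ (t - j)
      = ∑ k ∈ Finset.range (t - j + 1),
          (t - j).choose k * 2 ^ k * (-1 : ℝ) ^ (t - j - k) * σ *
            (α * ((2 * t + 1 - j - k : ℕ) : ℝ)) /
              (α * ((2 * t + 1 - j - k : ℕ) : ℝ) - 1) :=
  pareto_type_j_mean_formula_general t j hjt σ α hσ hα1
end

section
/- Let t ≥ 1 be an integer. Define reals B_t, B_{t−1}, …, B_0 by B_t = (1+t)/(1+2t) and, for 0 ≤ j < t, B_j = (1+j)/(1+2t) + (2(t−j)/(1+2t)) · B_{j+1}. Then B_j > 1/2 for every j with 0 ≤ j ≤ t. -/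
/-!
Downward induction from `j = t`. The base value `(1 + t)/(1 + 2t)` exceeds `1/2`, and if
`B_{j+1} > 1/2` then, the weight `2(t - j)/(1 + 2t)` being nonnegative,
`B_j ≥ (1 + j)/(1 + 2t) + (t - j)/(1 + 2t) = (1 + t)/(1 + 2t) > 1/2`.
-/

lemma one_half_lt_one_add_div_one_add_two_mul {t : ℝ} (ht : 0 ≤ t) :
    1 / 2 < (1 + t) / (1 + 2 * t) := by
  rw [div_lt_div_iff₀ two_pos (by positivity)]
  linarith

lemma one_half_lt_of_one_half_lt_next {t j b : ℝ} (hj₀ : 0 ≤ j) (hj : j ≤ t) (hb : 1 / 2 < b) :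
    1 / 2 < (1 + j) / (1 + 2 * t) + 2 * (t - j) / (1 + 2 * t) * b := by
  have ht : 0 ≤ t := by linarith
  have hw : 0 ≤ 2 * (t - j) / (1 + 2 * t) := by
    apply div_nonneg <;> linarith
  calc 1 / 2 < (1 + t) / (1 + 2 * t) := one_half_lt_one_add_div_one_add_two_mul ht
    _ = (1 + j) / (1 + 2 * t) + 2 * (t - j) / (1 + 2 * t) * (1 / 2) := by ring
    _ ≤ (1 + j) / (1 + 2 * t) + 2 * (t - j) / (1 + 2 * t) * b := by gcongr

theorem theorem7_Bj_gt_half_general (t : ℕ) (B : ℕ → ℝ)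
    (hBt : B t = (1 + (t : ℝ)) / (1 + 2 * t))
    (hBj : ∀ j : ℕ, j < t →
      B j = (1 + (j : ℝ)) / (1 + 2 * t) + (2 * ((t : ℝ) - j) / (1 + 2 * t)) * B (j + 1)) :
    ∀ j : ℕ, j ≤ t → B j > 1 / 2 := by
  intro j hj
  induction hj using Nat.decreasingInduction with
  | self => exact hBt ▸ one_half_lt_one_add_div_one_add_two_mul t.cast_nonneg
  | of_succ k hk ih =>
    rw [hBj k hk]
    exact one_half_lt_of_one_half_lt_next k.cast_nonneg (by exact_mod_cast hk.le) ih

/-- Key estimate in the proof of Theorem 7: with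
`B_t = (1+t)/(1+2t)` and `B_j = (1+j)/(1+2t) + (2(t−j)/(1+2t)) B_{j+1}` for `0 ≤ j < t`,
one has `B_j > 1/2` for all `0 ≤ j ≤ t`. -/
theorem theorem7_Bj_gt_half (t : ℕ) (ht : 1 ≤ t) (B : ℕ → ℝ)
    (hBt : B t = (1 + (t : ℝ)) / (1 + 2 * t))
    (hBj : ∀ j : ℕ, j < t →
      B j = (1 + (j : ℝ)) / (1 + 2 * t) + (2 * ((t : ℝ) - j) / (1 + 2 * t)) * B (j + 1)) :
    ∀ j : ℕ, j ≤ t → B j > 1 / 2 :=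
  theorem7_Bj_gt_half_general t B hBt hBj
end
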